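/- arXiv:2205.00429 — 6 statements merged into one kernel-verified Lean document; each statement's English description precedes it below -/
import Mathlib

section
/- Every positive concave mapping is a standard interference mapping: if T : ℝ₊^K → ℝ₊₊^K has each coordinate function concave (on the nonnegative orthant) and strictly positive, then T is monotone (x ≥ y implies T(x) ≥ T(y) componentwise) and scalable (for all α > 1 and x ≥ 0, αT(x) > T(αx) componentwise). -/
/-!
Monotonicity: if `0 ≤ y ≤ x` and `0 ≤ t < 1`, then `x = t • y + (1 - t) • b` with
`b = (x - t • y) / (1 - t) ≥ 0`, so concavity and `f b ≥ 0` give `t * f y ≤ f x`; letting `t → 1`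
yields `f y ≤ f x`. Scalability: `x = α⁻¹ • (α • x) + (1 - α⁻¹) • 0`, so concavity gives
`f x ≥ α⁻¹ * f (α • x) + (1 - α⁻¹) * f 0 > α⁻¹ * f (α • x)` because `f 0 > 0`.
-/

open Set

section OrderedModule

variable {E : Type*} [AddCommGroup E] [PartialOrder E] [IsOrderedAddMonoid E] [Module ℝ E]
  [PosSMulMono ℝ E] {f : E → ℝ}

lemma ConcaveOn.mul_le_of_le_of_nonneg (hf : ConcaveOn ℝ (Ici 0) f)
    (hf₀ : ∀ z, 0 ≤ z → 0 ≤ f z) {x y : E} (hy : 0 ≤ y) (hyx : y ≤ x)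
    {t : ℝ} (ht₀ : 0 ≤ t) (ht₁ : t < 1) : t * f y ≤ f x := by
  set b : E := (1 - t)⁻¹ • (x - t • y)
  have hb : 0 ≤ b := by
    have : (1 - t) • y ≤ x - t • y := by
      rw [sub_smul, one_smul]
      exact sub_le_sub_right hyx _
    exact smul_nonneg (inv_nonneg.2 (by linarith)) ((smul_nonneg (by linarith) hy).trans this)
  have hx : t • y + (1 - t) • b = x := by
    rw [smul_inv_smul₀ (by linarith : (1 - t) ≠ 0), add_sub_cancel]
  calc t * f y ≤ t • f y + (1 - t) • f b := by
        simp only [smul_eq_mul]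
        nlinarith [hf₀ b hb]
    _ ≤ f x := hx ▸ hf.2 hy hb ht₀ (by linarith) (by ring)

lemma ConcaveOn.monotoneOn_of_nonneg (hf : ConcaveOn ℝ (Ici 0) f)
    (hf₀ : ∀ z, 0 ≤ z → 0 ≤ f z) : MonotoneOn f (Ici 0) := by
  intro y hy x _ hyx
  by_contra! hlt
  have hfy : 0 < f y := (hf₀ x (hy.trans hyx)).trans_lt hlt
  obtain ⟨t, hxt, ht₁⟩ := exists_between ((div_lt_one hfy).2 hlt)
  have ht₀ : 0 ≤ t := (div_nonneg (hf₀ x (hy.trans hyx)) hfy.le).trans hxt.le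
  have := hf.mul_le_of_le_of_nonneg hf₀ hy hyx ht₀ ht₁
  rw [div_lt_iff₀ hfy] at hxt
  linarith

end OrderedModule

lemma ConcaveOn.map_smul_lt_mul {E : Type*} [AddCommGroup E] [Module ℝ E] {s : Set E}
    {f : E → ℝ} (hf : ConcaveOn ℝ s f) (h0 : (0 : E) ∈ s) (hf0 : 0 < f 0) {α : ℝ} (hα : 1 < α)
    {x : E} (hx : α • x ∈ s) : f (α • x) < α * f x := by
  have hα₀ : 0 < α := by linarith
  have hcomb : α⁻¹ • (α • x) + (1 - α⁻¹) • (0 : E) = x := by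
    rw [inv_smul_smul₀ hα₀.ne', smul_zero, add_zero]
  have hconc := hf.2 hx h0 (inv_nonneg.2 hα₀.le) (sub_nonneg.2 (inv_le_one_of_one_le₀ hα.le))
    (by ring)
  rw [hcomb, smul_eq_mul, smul_eq_mul] at hconc
  have : 0 < (1 - α⁻¹) * f 0 := mul_pos (sub_pos.2 (inv_lt_one_of_one_lt₀ hα)) hf0
  calc f (α • x) = α * (α⁻¹ * f (α • x)) := by field_simp
    _ < α * f x := by gcongr; linarith

theorem stmt_2 {K : ℕ} (T : (Fin K → ℝ) → (Fin K → ℝ))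
    (hpos : ∀ x : Fin K → ℝ, (∀ i, 0 ≤ x i) → ∀ k, 0 < T x k)
    (hconc : ∀ x y : Fin K → ℝ, (∀ i, 0 ≤ x i) → (∀ i, 0 ≤ y i) →
      ∀ t : ℝ, 0 ≤ t → t ≤ 1 →
        ∀ k, t * T x k + (1 - t) * T y k ≤ T (t • x + (1 - t) • y) k) :
    (∀ x y : Fin K → ℝ, (∀ i, 0 ≤ y i) → y ≤ x → (∀ i, 0 ≤ x i) → T y ≤ T x) ∧
    (∀ x : Fin K → ℝ, (∀ i, 0 ≤ x i) → ∀ α : ℝ, 1 < α → ∀ k, T (α • x) k < α * T x k) := by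
  have hT : ∀ k, ConcaveOn ℝ (Ici 0) (T · k) := fun k =>
    ⟨convex_Ici 0, fun x hx y hy a b ha hb hab => by
      obtain rfl : b = 1 - a := by linarith
      exact hconc x y hx hy a ha (by linarith) k⟩
  refine ⟨fun x y hy hyx hx k => ?_, fun x hx α hα k => ?_⟩
  · exact (hT k).monotoneOn_of_nonneg (fun z hz => (hpos z hz k).le) hy hx hyx
  · refine (hT k).map_smul_lt_mul self_mem_Ici (hpos 0 (fun _ => le_rfl) k) hα ?_
    exact smul_nonneg (by linarith) (show 0 ≤ x from hx)
end

section
/- A standard interference mapping has at most one fixed point: if T : ℝ₊^K → ℝ₊₊^K is monotone and scalable (αT(x) > T(αx) componentwise for all α > 1), and T(x) = x and T(y) = y with x, y ∈ ℝ₊^K, then x = y. -/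
/-!
Scalability at `0` forces `T 0 > 0`, so by monotonicity `T > 0` and fixed points are positive.
Given fixed points `x` and `y`, scale `x` by the smallest `α` with `y ≤ α • x`.
Were `α > 1`, then at a coordinate `j` where `y j = α * x j`, monotonicity and scalability give
`y j = T y j ≤ T (α • x) j < α * T x j = y j`. Hence `y ≤ x`, and by symmetry `x = y`.
-/

section StandardInterference

variable {ι : Type*} {T : (ι → ℝ) → (ι → ℝ)}
  (hmono : ∀ x y : ι → ℝ, (∀ i, 0 ≤ y i) → (∀ i, 0 ≤ x i) → y ≤ x → T y ≤ T x)
  (hscal : ∀ x : ι → ℝ, (∀ i, 0 ≤ x i) → ∀ α : ℝ, 1 < α → ∀ k, T (α • x) k < α * T x k)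
include hscal

lemma apply_zero_pos_of_scalable (k : ι) : 0 < T 0 k := by
  have h := hscal 0 (fun _ ↦ le_rfl) 2 one_lt_two k
  rw [smul_zero] at h
  linarith

include hmono

lemma apply_pos_of_mono_of_scalable {x : ι → ℝ} (hx : ∀ i, 0 ≤ x i) (k : ι) : 0 < T x k :=
  (apply_zero_pos_of_scalable hscal k).trans_le
    (hmono x 0 (fun _ ↦ le_rfl) hx hx k)

lemma le_of_isFixedPt_of_mono_of_scalable [Finite ι] {x y : ι → ℝ}
    (hx : ∀ i, 0 ≤ x i) (hy : ∀ i, 0 ≤ y i) (hfx : T x = x) (hfy : T y = y) : y ≤ x := by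
  by_contra hyx
  obtain ⟨i, hi⟩ : ∃ i, x i < y i := by simpa [Pi.le_def] using hyx
  have hxpos : ∀ i, 0 < x i := fun i ↦ hfx ▸ apply_pos_of_mono_of_scalable hmono hscal hx i
  have : Nonempty ι := ⟨i⟩
  obtain ⟨j, hj⟩ := Finite.exists_max fun i ↦ y i / x i
  set α := y j / x j
  have hα : 1 < α := ((one_lt_div (hxpos i)).2 hi).trans_le (hj i)
  have hyα : y ≤ α • x := fun i ↦ by
    simpa [div_le_iff₀ (hxpos i)] using hj i
  have hyj : y j = α * x j := (div_mul_cancel₀ _ (hxpos j).ne').symm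
  have hαx : ∀ i, 0 ≤ (α • x) i := fun i ↦ by
    simpa using mul_nonneg (zero_le_one.trans hα.le) (hx i)
  have := calc
    y j = T y j := by rw [hfy]
    _ ≤ T (α • x) j := hmono _ _ hy hαx hyα j
    _ < α * T x j := hscal x hx α hα j
    _ = y j := by rw [hfx, hyj]
  exact lt_irrefl _ this

end StandardInterference

theorem stmt_3_general {K : ℕ} (T : (Fin K → ℝ) → (Fin K → ℝ))
    (hmono : ∀ x y : Fin K → ℝ, (∀ i, 0 ≤ y i) → (∀ i, 0 ≤ x i) → y ≤ x → T y ≤ T x)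
    (hscal : ∀ x : Fin K → ℝ, (∀ i, 0 ≤ x i) → ∀ α : ℝ, 1 < α → ∀ k, T (α • x) k < α * T x k)
    (x y : Fin K → ℝ) (hx : ∀ i, 0 ≤ x i) (hy : ∀ i, 0 ≤ y i)
    (hfx : T x = x) (hfy : T y = y) :
    x = y :=
  le_antisymm (le_of_isFixedPt_of_mono_of_scalable hmono hscal hy hx hfy hfx)
    (le_of_isFixedPt_of_mono_of_scalable hmono hscal hx hy hfx hfy)

theorem stmt_3 {K : ℕ} (T : (Fin K → ℝ) → (Fin K → ℝ))
    (hpos : ∀ x : Fin K → ℝ, (∀ i, 0 ≤ x i) → ∀ k, 0 < T x k)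
    (hmono : ∀ x y : Fin K → ℝ, (∀ i, 0 ≤ y i) → (∀ i, 0 ≤ x i) → y ≤ x → T y ≤ T x)
    (hscal : ∀ x : Fin K → ℝ, (∀ i, 0 ≤ x i) → ∀ α : ℝ, 1 < α → ∀ k, T (α • x) k < α * T x k)
    (x y : Fin K → ℝ) (hx : ∀ i, 0 ≤ x i) (hy : ∀ i, 0 ≤ y i)
    (hfx : T x = x) (hfy : T y = y) :
    x = y :=
  stmt_3_general T hmono hscal x y hx hy hfx hfy
end

section
/- Suppose (t★, p★) ∈ ℝ₊₊ × ℝ₊₊^K satisfies p★ = t★(Mp★ + u) and (1/p_max) max_n aₙᵀ p★ = 1, with M ≥ 0, u > 0, aₙ ≥ 0, p_max > 0. Then 1/t★ = max_{n∈{1,…,N}} ρ(Mₙ), where Mₙ := M + (1/p_max)·u·aₙᵀ and ρ denotes spectral radius. -/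
/-! With `λ = 1 / t★` the fixed-point equation reads `M p★ + u = λ p★`, so for a rank-one
perturbation `(M + u vᵀ) p★ = M p★ + (vᵀ p★) u` is `≤ λ p★` when `vᵀ p★ ≤ 1` and `= λ p★` when
`vᵀ p★ = 1`. Taking `v = aₙ / p_max`, the normalization gives `vᵀ p★ ≤ 1` for every `n`, with
equality at a maximizing `n`. Equality makes `λ` an eigenvalue of that `Mₙ`. For the upper bound,
a complex eigenpair `Mₙ x = μ x` gives `|μ| |x| ≤ Mₙ |x|` entrywise; comparing `|x|` with the
positive subinvariant vector `p★` at an index maximizing `|xᵢ| / p★ᵢ` yields `|μ| ≤ λ`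
(Collatz–Wielandt). -/

open scoped ENNReal

/-- The spectral radius of a real square matrix, computed over `ℂ`. -/
noncomputable def specRad {K : ℕ} (M : Matrix (Fin K) (Fin K) ℝ) : ℝ≥0∞ :=
  spectralRadius ℂ (Matrix.toEuclideanCLM (𝕜 := ℂ) (M.map (algebraMap ℝ ℂ)))

open Matrix

theorem Matrix.mem_spectrum_iff_exists_mulVec_eq_smul {n 𝕜 : Type*} [Fintype n] [DecidableEq n]
    [Field 𝕜] (A : Matrix n n 𝕜) (μ : 𝕜) :
    μ ∈ spectrum 𝕜 A ↔ ∃ v ≠ 0, A *ᵥ v = μ • v := by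
  rw [← spectrum_toLin', ← Module.End.hasEigenvalue_iff_mem_spectrum]
  constructor
  · intro h
    obtain ⟨v, hv⟩ := h.exists_hasEigenvector
    exact ⟨v, hv.2, by simpa using hv.apply_eq_smul⟩
  · rintro ⟨v, hv, hAv⟩
    exact Module.End.hasEigenvalue_of_hasEigenvector
      ⟨Module.End.mem_eigenspace_iff.mpr (by simpa using hAv), hv⟩

section Nonneg

variable {n : Type*} [Fintype n] {A : Matrix n n ℝ}

theorem Matrix.mulVec_le_mulVec_of_nonneg (hA : ∀ i j, 0 ≤ A i j) {x y : n → ℝ} (hxy : x ≤ y) :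
    A *ᵥ x ≤ A *ᵥ y := fun i =>
  Finset.sum_le_sum fun j _ => mul_le_mul_of_nonneg_left (hxy j) (hA i j)

theorem le_of_smul_le_mulVec_of_mulVec_le (hA : ∀ i j, 0 ≤ A i j) {p : n → ℝ}
    (hp : ∀ i, 0 < p i) {lam : ℝ} (hAp : A *ᵥ p ≤ lam • p) {y : n → ℝ} (hy : 0 ≤ y)
    (hy₀ : y ≠ 0) {c : ℝ} (hAy : c • y ≤ A *ᵥ y) : c ≤ lam := by
  obtain ⟨j, hj⟩ := Function.ne_iff.mp hy₀
  obtain ⟨i, -, hi⟩ := Finset.univ.exists_max_image (fun k => y k / p k) ⟨j, Finset.mem_univ _⟩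
  set m := y i / p i
  have hy_le : y ≤ m • p := fun k => (div_le_iff₀ (hp k)).mp (hi k (Finset.mem_univ _))
  have hyi : y i = m * p i := (div_mul_cancel₀ (y i) (hp i).ne').symm
  have hyi_pos : 0 < y i := by
    have : 0 < y j / p j := div_pos (lt_of_le_of_ne (hy j) (Ne.symm hj)) (hp j)
    rw [hyi]
    exact mul_pos (this.trans_le (hi j (Finset.mem_univ _))) (hp i)
  refine le_of_mul_le_mul_right ?_ hyi_pos
  calc c * y i ≤ (A *ᵥ y) i := hAy i
    _ ≤ (A *ᵥ (m • p)) i := mulVec_le_mulVec_of_nonneg hA hy_le i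
    _ = m * (A *ᵥ p) i := by rw [mulVec_smul, Pi.smul_apply, smul_eq_mul]
    _ ≤ m * (lam * p i) := mul_le_mul_of_nonneg_left (hAp i) (div_nonneg (hy i) (hp i).le)
    _ = lam * y i := by rw [hyi]; ring

theorem norm_smul_le_mulVec_norm (hA : ∀ i j, 0 ≤ A i j) {μ : ℂ} {x : n → ℂ}
    (hx : A.map (algebraMap ℝ ℂ) *ᵥ x = μ • x) :
    ‖μ‖ • (fun i => ‖x i‖) ≤ A *ᵥ fun i => ‖x i‖ := fun i =>
  calc ‖μ‖ * ‖x i‖ = ‖(A.map (algebraMap ℝ ℂ) *ᵥ x) i‖ := by rw [hx, Pi.smul_apply, norm_smul]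
    _ ≤ ∑ j, ‖A.map (algebraMap ℝ ℂ) i j * x j‖ := norm_sum_le _ _
    _ = (A *ᵥ fun j => ‖x j‖) i := by
      simp [mulVec, dotProduct, abs_of_nonneg (hA i _)]

end Nonneg

section SpecRad

variable {K : ℕ} {A : Matrix (Fin K) (Fin K) ℝ}

theorem specRad_eq_iSup_spectrum (A : Matrix (Fin K) (Fin K) ℝ) :
    specRad A = ⨆ μ ∈ spectrum ℂ (A.map (algebraMap ℝ ℂ)), (‖μ‖₊ : ℝ≥0∞) := by
  rw [specRad, spectralRadius, AlgEquiv.spectrum_eq]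

theorem specRad_le_of_mulVec_le (hA : ∀ i j, 0 ≤ A i j) {p : Fin K → ℝ} (hp : ∀ i, 0 < p i)
    {lam : ℝ} (hAp : A *ᵥ p ≤ lam • p) : specRad A ≤ ENNReal.ofReal lam := by
  rw [specRad_eq_iSup_spectrum]
  refine iSup₂_le fun μ hμ => ?_
  obtain ⟨x, hx, hAx⟩ := (mem_spectrum_iff_exists_mulVec_eq_smul _ μ).mp hμ
  have hx' : (fun i => ‖x i‖) ≠ 0 := fun h => hx (funext fun i => norm_eq_zero.mp (congrFun h i))
  rw [← enorm_eq_nnnorm, ← ofReal_norm]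
  exact ENNReal.ofReal_le_ofReal <| le_of_smul_le_mulVec_of_mulVec_le hA hp hAp
    (fun i => norm_nonneg _) hx' (norm_smul_le_mulVec_norm hA hAx)

theorem ofReal_le_specRad_of_mulVec_eq {p : Fin K → ℝ} (hp : p ≠ 0) {lam : ℝ} (hlam : 0 ≤ lam)
    (hAp : A *ᵥ p = lam • p) : ENNReal.ofReal lam ≤ specRad A := by
  have hmem : (lam : ℂ) ∈ spectrum ℂ (A.map (algebraMap ℝ ℂ)) := by
    refine (mem_spectrum_iff_exists_mulVec_eq_smul _ _).mpr
      ⟨algebraMap ℝ ℂ ∘ p, ?_, funext fun i => ?_⟩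
    · exact fun h => hp (funext fun i => Complex.ofReal_eq_zero.mp (congrFun h i))
    · rw [← RingHom.map_mulVec (algebraMap ℝ ℂ), hAp]
      simp
  rw [specRad_eq_iSup_spectrum]
  calc ENNReal.ofReal lam = ‖(lam : ℂ)‖₊ := by
        rw [← enorm_eq_nnnorm, ← ofReal_norm, Complex.norm_real, Real.norm_of_nonneg hlam]
    _ ≤ _ := le_iSup₂ (f := fun μ (_ : μ ∈ spectrum ℂ (A.map (algebraMap ℝ ℂ))) => (‖μ‖₊ : ℝ≥0∞))
        _ hmem

end SpecRad

section RankOne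

variable {n : Type*} [Fintype n] {M : Matrix n n ℝ} {u v p : n → ℝ} {lam : ℝ}

theorem add_vecMulVec_mulVec (M : Matrix n n ℝ) (u v p : n → ℝ) :
    (M + vecMulVec u v) *ᵥ p = M *ᵥ p + (v ⬝ᵥ p) • u := by
  rw [add_mulVec, vecMulVec_mulVec, op_smul_eq_smul]

theorem add_vecMulVec_mulVec_le (hu : 0 ≤ u) (heig : M *ᵥ p + u = lam • p) (hv : v ⬝ᵥ p ≤ 1) :
    (M + vecMulVec u v) *ᵥ p ≤ lam • p := by
  rw [add_vecMulVec_mulVec, ← heig]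
  exact add_le_add_right (smul_le_of_le_one_left hu hv) _

theorem add_vecMulVec_mulVec_eq (heig : M *ᵥ p + u = lam • p) (hv : v ⬝ᵥ p = 1) :
    (M + vecMulVec u v) *ᵥ p = lam • p := by
  rw [add_vecMulVec_mulVec, hv, one_smul, heig]

end RankOne

theorem stmt_12_general {K N : ℕ} (hN : 0 < N) (pmax : ℝ) (hpmax : 0 < pmax)
    (M : Matrix (Fin K) (Fin K) ℝ) (hM : ∀ i j, 0 ≤ M i j)
    (u : Fin K → ℝ) (hu : ∀ i, 0 < u i)
    (a : Fin N → Fin K → ℝ) (ha : ∀ n k, 0 ≤ a n k)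
    (t : ℝ) (ht : 0 < t) (p : Fin K → ℝ) (hp : ∀ i, 0 < p i)
    (heq : p = t • (M.mulVec p + u))
    (hnorm : (1 / pmax) *
      Finset.univ.sup' ⟨⟨0, hN⟩, Finset.mem_univ _⟩ (fun n => a n ⬝ᵥ p) = 1) :
    ENNReal.ofReal (1 / t) =
      ⨆ n : Fin N, specRad (M + (1 / pmax) • vecMulVec u (a n)) := by
  have heig : M *ᵥ p + u = (1 / t) • p := by
    conv_rhs => rw [heq]
    rw [smul_smul, one_div_mul_cancel ht.ne', one_smul]
  simp_rw [← vecMulVec_smul]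
  have hdot : ∀ n, (1 / pmax) • a n ⬝ᵥ p = (1 / pmax) * (a n ⬝ᵥ p) := fun n =>
    smul_dotProduct _ _ _
  have hle : ∀ n, (1 / pmax) • a n ⬝ᵥ p ≤ 1 := fun n => by
    rw [hdot]
    exact (mul_le_mul_of_nonneg_left (Finset.le_sup' (fun n => a n ⬝ᵥ p) (Finset.mem_univ n))
      (by positivity)).trans_eq hnorm
  obtain ⟨n₀, -, hn₀⟩ := Finset.exists_mem_eq_sup' ⟨⟨0, hN⟩, Finset.mem_univ _⟩ (fun n => a n ⬝ᵥ p)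
  have hn₀p : (1 / pmax) • a n₀ ⬝ᵥ p = 1 := by rw [hdot, ← hn₀, hnorm]
  have hp₀ : p ≠ 0 := by
    rintro rfl
    simp at hn₀p
  have hnonneg : ∀ n i j, 0 ≤ (M + vecMulVec u ((1 / pmax) • a n)) i j := fun n i j => by
    have := hM i j; have := hu i; have := ha n j
    simp only [Matrix.add_apply, vecMulVec_apply, Pi.smul_apply, smul_eq_mul]
    positivity
  refine le_antisymm ?_ (iSup_le fun n => specRad_le_of_mulVec_le (hnonneg n) hp
    (add_vecMulVec_mulVec_le (fun i => (hu i).le) heig (hle n)))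
  exact (ofReal_le_specRad_of_mulVec_eq hp₀ (by positivity)
    (add_vecMulVec_mulVec_eq heig hn₀p)).trans
    (le_iSup (fun n => specRad (M + vecMulVec u ((1 / pmax) • a n))) n₀)

theorem stmt_12 {K N : ℕ} (hN : 0 < N) (pmax : ℝ) (hpmax : 0 < pmax)
    (M : Matrix (Fin K) (Fin K) ℝ) (hM : ∀ i j, 0 ≤ M i j)
    (u : Fin K → ℝ) (hu : ∀ i, 0 < u i)
    (a : Fin N → Fin K → ℝ) (ha : ∀ n k, 0 ≤ a n k) (ha' : ∃ n k, 0 < a n k)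
    (t : ℝ) (ht : 0 < t) (p : Fin K → ℝ) (hp : ∀ i, 0 < p i)
    (heq : p = t • (M.mulVec p + u))
    (hnorm : (1 / pmax) *
      Finset.univ.sup' ⟨⟨0, hN⟩, Finset.mem_univ _⟩ (fun n => a n ⬝ᵥ p) = 1) :
    ENNReal.ofReal (1 / t) =
      ⨆ n : Fin N, specRad (M + (1 / pmax) • vecMulVec u (a n)) :=
  stmt_12_general hN pmax hpmax M hM u hu a ha t ht p hp heq hnorm
end

section
/- If (t★, p★) ∈ ℝ₊₊ × ℝ₊₊^K satisfies p★ = t★(Mp★ + u) with M ≥ 0 and u > 0, and this solution is unique (as the solution to the conditional eigenvalue problem), then the matrix I − t★M is invertible and p★ = t★(I − t★M)^{-1}u. -/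
/-!
If a nonnegative matrix `A` admits a strictly positive vector `p` with `A p < p` componentwise,
then `A v = v` forces `v = 0`: with `c = max_k |v k| / p k` we have `|v| ≤ c p`, and at an index
`i` attaining the maximum, `c p i = |v i| = |(A v) i| ≤ c (A p) i`, which is impossible for `c > 0`.
A positive solution of `p = t (M p + u)` with `u > 0` gives such a `p` for `A = t M`, so `1 - t M`
is invertible and the equation solves to `p = t (1 - t M)⁻¹ u`.
-/

open Matrix

section NonnegMatrix

variable {ι R : Type*} [Fintype ι] [Field R] [LinearOrder R] [IsStrictOrderedRing R]
  {A : Matrix ι ι R}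

lemma abs_mulVec_apply_le (hA : ∀ i j, 0 ≤ A i j) (v : ι → R) (i : ι) :
    |(A *ᵥ v) i| ≤ (A *ᵥ fun k => |v k|) i := by
  refine (Finset.abs_sum_le_sum_abs _ _).trans_eq (Finset.sum_congr rfl fun k _ => ?_)
  rw [abs_mul, abs_of_nonneg (hA i k)]

lemma eq_zero_of_mulVec_eq_self (hA : ∀ i j, 0 ≤ A i j) {p : ι → R} (hp : ∀ i, 0 < p i)
    (hAp : ∀ i, (A *ᵥ p) i < p i) {v : ι → R} (hv : A *ᵥ v = v) : v = 0 := by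
  rcases isEmpty_or_nonempty ι with hι | hι
  · exact Subsingleton.elim _ _
  obtain ⟨i, -, hi⟩ :=
    Finset.exists_max_image Finset.univ (fun k => |v k| / p k) Finset.univ_nonempty
  set c := |v i| / p i
  have hbound : ∀ k, |v k| ≤ (c • p) k := fun k =>
    (div_le_iff₀ (hp k)).1 (hi k (Finset.mem_univ k))
  have hc : c ≤ 0 := by
    by_contra! hc
    have : c * p i < c * p i := calc
      c * p i = |(A *ᵥ v) i| := by rw [hv, div_mul_cancel₀ _ (hp i).ne']
      _ ≤ (A *ᵥ fun k => |v k|) i := abs_mulVec_apply_le hA v i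
      _ ≤ (A *ᵥ (c • p)) i := dotProduct_le_dotProduct_of_nonneg_left hbound (hA i)
      _ = c * (A *ᵥ p) i := by rw [mulVec_smul, Pi.smul_apply, smul_eq_mul]
      _ < c * p i := mul_lt_mul_of_pos_left (hAp i) hc
    exact lt_irrefl _ this
  funext k
  exact abs_nonpos_iff.1 ((hbound k).trans (mul_nonpos_of_nonpos_of_nonneg hc (hp k).le))

lemma isUnit_one_sub_of_mulVec_lt [DecidableEq ι] (hA : ∀ i j, 0 ≤ A i j) {p : ι → R}
    (hp : ∀ i, 0 < p i) (hAp : ∀ i, (A *ᵥ p) i < p i) : IsUnit (1 - A) := by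
  refine mulVec_injective_iff_isUnit.1 fun v w hvw =>
    sub_eq_zero.1 (eq_zero_of_mulVec_eq_self hA hp hAp ?_)
  have : (1 - A) *ᵥ (v - w) = 0 := by rw [mulVec_sub, hvw, sub_self]
  rwa [sub_mulVec, one_mulVec, sub_eq_zero, eq_comm] at this

end NonnegMatrix

theorem stmt_13_general {K : ℕ}
    (M : Matrix (Fin K) (Fin K) ℝ) (hM : ∀ i j, 0 ≤ M i j)
    (u : Fin K → ℝ) (hu : ∀ i, 0 < u i)
    (t : ℝ) (ht : 0 < t) (p : Fin K → ℝ) (hp : ∀ i, 0 < p i)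
    (heq : p = t • (M.mulVec p + u)) :
    IsUnit (1 - t • M) ∧ p = t • (1 - t • M)⁻¹.mulVec u := by
  have hsub : (t • M) *ᵥ p = p - t • u := by
    rw [eq_sub_iff_add_eq, smul_mulVec, ← smul_add, ← heq]
  have hunit : IsUnit (1 - t • M) := by
    refine isUnit_one_sub_of_mulVec_lt (fun i j => smul_nonneg ht.le (hM i j)) hp fun i => ?_
    rw [hsub, Pi.sub_apply, Pi.smul_apply, smul_eq_mul, sub_lt_self_iff]
    exact mul_pos ht (hu i)
  have hfix : (1 - t • M) *ᵥ p = t • u := by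
    rw [sub_mulVec, one_mulVec, hsub, sub_sub_cancel]
  let := hunit.invertible
  exact ⟨hunit, by rw [← mulVec_smul, inv_mulVec_eq_vec hfix.symm]⟩

theorem stmt_13 {K N : ℕ} (hN : 0 < N) (pmax : ℝ) (hpmax : 0 < pmax)
    (M : Matrix (Fin K) (Fin K) ℝ) (hM : ∀ i j, 0 ≤ M i j)
    (u : Fin K → ℝ) (hu : ∀ i, 0 < u i)
    (a : Fin N → Fin K → ℝ) (ha : ∀ n k, 0 ≤ a n k)
    (nstar : (Fin K → ℝ) → ℝ)
    (hnstar : ∀ q, nstar q = (1 / pmax) *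
      Finset.univ.sup' ⟨⟨0, hN⟩, Finset.mem_univ _⟩ (fun n => a n ⬝ᵥ fun k => |q k|))
    (t : ℝ) (ht : 0 < t) (p : Fin K → ℝ) (hp : ∀ i, 0 < p i)
    (heq : p = t • (M.mulVec p + u)) (hn1 : nstar p = 1)
    (huniq : ∀ q : Fin K → ℝ, (∀ i, 0 < q i) → nstar q = 1 →
      q = t • (M.mulVec q + u) → q = p) :
    IsUnit (1 - t • M) ∧ p = t • (1 - t • M)⁻¹.mulVec u :=
  stmt_13_general M hM u hu t ht p hp heq
end

section
/- For a standard interference mapping T : ℝ₊^K → ℝ₊₊^K (monotone and scalable) and any λ ≥ 1, if x ∈ ℝ₊^K satisfies T(x) = λx, then for every μ with T(y) = μy, y ∈ ℝ₊₊^K, ‖x‖ = ‖y‖ = 1 for a fixed monotone norm ‖·‖, we have (λ, x) = (μ, y); i.e., the conditional eigenvalue problem T(x) = λx, ‖x‖ = 1 has at most one solution (λ, x) ∈ ℝ₊₊ × ℝ₊₊^K. -/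
/-!
Compare two positive eigenvectors through the largest ratio `t = max_k x k / y k`, attained at
`j`, so that `x ≤ t • y` with equality in coordinate `j`. Monotonicity of the norm and
`‖x‖ = ‖y‖ = 1` force `t ≥ 1`, and evaluating `T x ≤ T (t • y)` at `j` gives `λ ≤ μ`, strictly
when `t > 1` by scalability. Exchanging the roles of the two eigenpairs yields `λ = μ`, hence
`t = 1` both ways, i.e. `x ≤ y ≤ x`.
-/

section ConditionalEigenvalue

variable {ι : Type*}

lemma exists_le_smul_eq_at_of_pos [Finite ι] [Nonempty ι] {x y : ι → ℝ}
    (hx : ∀ i, 0 ≤ x i) (hy : ∀ i, 0 < y i) :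
    ∃ t : ℝ, ∃ j : ι, 0 ≤ t ∧ x ≤ t • y ∧ x j = t * y j := by
  obtain ⟨j, hj⟩ := Finite.exists_max fun i => x i / y i
  refine ⟨x j / y j, j, div_nonneg (hx j) (hy j).le, fun i => ?_, ?_⟩
  · simpa only [Pi.smul_apply, smul_eq_mul, div_le_iff₀ (hy i)] using hj i
  · rw [div_mul_cancel₀ _ (hy j).ne']

lemma one_le_of_le_smul_of_norm_eq_one {nn : (ι → ℝ) → ℝ}
    (hnnhom : ∀ (c : ℝ) (p), nn (c • p) = |c| * nn p)
    (hnnmono : ∀ p q : ι → ℝ, (∀ i, 0 ≤ p i) → p ≤ q → nn p ≤ nn q)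
    {x y : ι → ℝ} {t : ℝ} (hx : ∀ i, 0 ≤ x i) (ht : 0 ≤ t) (hxy : x ≤ t • y)
    (hnx : nn x = 1) (hny : nn y = 1) : 1 ≤ t := by
  simpa only [hnx, hnnhom, hny, abs_of_nonneg ht, mul_one] using hnnmono x (t • y) hx hxy

variable {T : (ι → ℝ) → ι → ℝ}
  (hmono : ∀ x y : ι → ℝ, (∀ i, 0 ≤ x i) → (∀ i, 0 ≤ y i) → x ≤ y → T x ≤ T y)
  (hscal : ∀ x : ι → ℝ, (∀ i, 0 ≤ x i) → ∀ α : ℝ, 1 < α → ∀ k, T (α • x) k < α * T x k)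
  {lam mu t : ℝ} {x y : ι → ℝ} {j : ι}

include hmono in
lemma eigenvalue_mul_le_apply_smul (hx : ∀ i, 0 ≤ x i) (hy : ∀ i, 0 ≤ y i) (ht : 0 ≤ t)
    (hTx : T x = lam • x) (hxy : x ≤ t • y) : lam * x j ≤ T (t • y) j := by
  have hty : ∀ i, 0 ≤ (t • y) i := fun i => mul_nonneg ht (hy i)
  simpa only [hTx, Pi.smul_apply, smul_eq_mul] using hmono x (t • y) hx hty hxy j

include hmono hscal in
lemma eigenvalue_le_of_le_smul_eq_at (hx : ∀ i, 0 ≤ x i) (hy : ∀ i, 0 ≤ y i) (ht : 1 ≤ t)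
    (hTx : T x = lam • x) (hTy : T y = mu • y) (hxy : x ≤ t • y) (hxj : x j = t * y j)
    (hxj0 : 0 < x j) : lam ≤ mu ∧ (1 < t → lam < mu) := by
  have hlow : lam * x j ≤ T (t • y) j :=
    eigenvalue_mul_le_apply_smul hmono hx hy (zero_le_one.trans ht) hTx hxy
  have hup : t * T y j = mu * x j := by rw [hTy, hxj, Pi.smul_apply, smul_eq_mul]; ring
  have hstrict (ht1 : 1 < t) : lam < mu :=
    lt_of_mul_lt_mul_right ((hlow.trans_lt (hscal y hy t ht1 j)).trans_eq hup) hxj0.le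
  refine ⟨?_, hstrict⟩
  rcases ht.eq_or_lt with rfl | ht1
  · exact le_of_mul_le_mul_right (hlow.trans_eq (by rw [one_smul, ← hup, one_mul])) hxj0
  · exact (hstrict ht1).le

include hmono hscal in
lemma exists_one_le_le_smul_of_eigenvector [Finite ι] [Nonempty ι] {nn : (ι → ℝ) → ℝ}
    (hnnhom : ∀ (c : ℝ) (p), nn (c • p) = |c| * nn p)
    (hnnmono : ∀ p q : ι → ℝ, (∀ i, 0 ≤ p i) → p ≤ q → nn p ≤ nn q)
    (hx : ∀ i, 0 < x i) (hy : ∀ i, 0 < y i) (hTx : T x = lam • x) (hTy : T y = mu • y)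
    (hnx : nn x = 1) (hny : nn y = 1) :
    ∃ t : ℝ, 1 ≤ t ∧ x ≤ t • y ∧ lam ≤ mu ∧ (1 < t → lam < mu) := by
  have hx' : ∀ i, 0 ≤ x i := fun i => (hx i).le
  obtain ⟨t, j, ht0, hxy, hxj⟩ := exists_le_smul_eq_at_of_pos hx' hy
  have ht : 1 ≤ t := one_le_of_le_smul_of_norm_eq_one hnnhom hnnmono hx' ht0 hxy hnx hny
  exact ⟨t, ht, hxy,
    eigenvalue_le_of_le_smul_eq_at hmono hscal hx' (fun i => (hy i).le) ht hTx hTy hxy hxj (hx j)⟩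

end ConditionalEigenvalue

theorem stmt_18_general {K : ℕ} (T : (Fin K → ℝ) → (Fin K → ℝ))
    (hmono : ∀ x y : Fin K → ℝ, (∀ i, 0 ≤ x i) → (∀ i, 0 ≤ y i) → x ≤ y → T x ≤ T y)
    (hscal : ∀ x : Fin K → ℝ, (∀ i, 0 ≤ x i) → ∀ α : ℝ, 1 < α → ∀ k, T (α • x) k < α * T x k)
    (nn : (Fin K → ℝ) → ℝ)
    (hnnhom : ∀ (c : ℝ) (p), nn (c • p) = |c| * nn p)
    (hnnmono : ∀ p q : Fin K → ℝ, (∀ i, 0 ≤ p i) → p ≤ q → nn p ≤ nn q)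
    (lam mu : ℝ)
    (x y : Fin K → ℝ) (hx : ∀ i, 0 < x i) (hy : ∀ i, 0 < y i)
    (hTx : T x = lam • x) (hnx : nn x = 1)
    (hTy : T y = mu • y) (hny : nn y = 1) :
    lam = mu ∧ x = y := by
  have : Nonempty (Fin K) := by
    refine (isEmpty_or_nonempty (Fin K)).resolve_left fun _ => ?_
    have hnn0 : nn 0 = 0 := by simpa using hnnhom 0 0
    rw [Subsingleton.elim x 0, hnn0] at hnx
    exact zero_ne_one hnx
  obtain ⟨t, ht, hxy, hlm, hlm_lt⟩ :=
    exists_one_le_le_smul_of_eigenvector hmono hscal hnnhom hnnmono hx hy hTx hTy hnx hny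
  obtain ⟨s, hs, hyx, hml, hml_lt⟩ :=
    exists_one_le_le_smul_of_eigenvector hmono hscal hnnhom hnnmono hy hx hTy hTx hny hnx
  have heq : lam = mu := le_antisymm hlm hml
  have ht1 : 1 = t := ht.eq_of_not_lt fun h => (hlm_lt h).ne heq
  have hs1 : 1 = s := hs.eq_of_not_lt fun h => (hml_lt h).ne heq.symm
  rw [← ht1, one_smul] at hxy
  rw [← hs1, one_smul] at hyx
  exact ⟨heq, le_antisymm hxy hyx⟩

/-- Uniqueness of the solution of the conditional eigenvalue problem
`T(x) = λ x`, `‖x‖ = 1` for a standard interference mapping `T` and a monotone norm. -/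
theorem stmt_18 {K : ℕ} (T : (Fin K → ℝ) → (Fin K → ℝ))
    (hcont : ContinuousOn T {p | ∀ i, 0 ≤ p i})
    (hpos : ∀ x : Fin K → ℝ, (∀ i, 0 ≤ x i) → ∀ k, 0 < T x k)
    (hmono : ∀ x y : Fin K → ℝ, (∀ i, 0 ≤ x i) → (∀ i, 0 ≤ y i) → x ≤ y → T x ≤ T y)
    (hscal : ∀ x : Fin K → ℝ, (∀ i, 0 ≤ x i) → ∀ α : ℝ, 1 < α → ∀ k, T (α • x) k < α * T x k)
    (nn : (Fin K → ℝ) → ℝ)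
    (hnn0 : ∀ p, nn p = 0 ↔ p = 0)
    (hnnhom : ∀ (c : ℝ) (p), nn (c • p) = |c| * nn p)
    (hnntri : ∀ p q, nn (p + q) ≤ nn p + nn q)
    (hnnmono : ∀ p q : Fin K → ℝ, (∀ i, 0 ≤ p i) → p ≤ q → nn p ≤ nn q)
    (lam mu : ℝ) (hlam : 0 < lam) (hmu : 0 < mu)
    (x y : Fin K → ℝ) (hx : ∀ i, 0 < x i) (hy : ∀ i, 0 < y i)
    (hTx : T x = lam • x) (hnx : nn x = 1)
    (hTy : T y = mu • y) (hny : nn y = 1) :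
    lam = mu ∧ x = y :=
  stmt_18_general T hmono hscal nn hnnhom hnnmono lam mu x y hx hy hTx hnx hTy hny
end

section
/- Epigraph reformulation: if (t★, p★) ∈ ℝ₊₊ × ℝ₊₊^K satisfies p★ = t★(Mp★ + u) and ‖p★‖⋆ ≤ 1, and t★ is maximal among all t for which such a pair exists, then p★ maximizes min_k (b_k p_k)/(c_kᵀp + σ_k) over the feasible set S = {p ≥ 0 : ‖p‖⋆ ≤ 1}, and the optimal value equals t★. -/
/-!
Write `T_s x = s • (M x + u)`. In terms of `M` and `u`, the SINR of user `k` at `q` is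
`q k / (M q + u) k`, so a feasible `q` whose worst SINR is `s > 0` satisfies `T_s q ≤ q`.
`T_s` is monotone and `T_s 0 ≥ 0`, so by Knaster–Tarski on the box `[0, q]` it has a fixed point
`r ≤ q`, which is positive because `r ≥ s • u`, and feasible because the power constraint is
monotone. Maximality of `t★` then gives `s ≤ t★`, while at `p★` every SINR equals `t★`.
-/

open Matrix

theorem exists_mem_Icc_apply_eq_self {α : Type*} [ConditionallyCompleteLattice α] {f : α → α}
    (hf : Monotone f) {a b : α} (hab : a ≤ b) (ha : a ≤ f a) (hb : f b ≤ b) :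
    ∃ x ∈ Set.Icc a b, f x = x := by
  have : Fact (a ≤ b) := ⟨hab⟩
  let g : Set.Icc a b →o Set.Icc a b :=
    ⟨fun x => ⟨f x, ha.trans (hf x.2.1), (hf x.2.2).trans hb⟩, fun _ _ h => hf h⟩
  exact ⟨g.lfp, g.lfp.2, congrArg Subtype.val g.map_lfp⟩

section PositiveFixedPoint

variable {ι : Type*} [Fintype ι] {M : Matrix ι ι ℝ} {u : ι → ℝ}

theorem Matrix.mulVec_mono_of_nonneg (hM : ∀ i j, 0 ≤ M i j) : Monotone (M *ᵥ ·) :=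
  fun _ _ h k => dotProduct_le_dotProduct_of_nonneg_left h fun j => hM k j

theorem exists_pos_eq_smul_mulVec_add_le (hM : ∀ i j, 0 ≤ M i j) (hu : ∀ k, 0 < u k)
    {s : ℝ} (hs : 0 < s) {q : ι → ℝ} (hq : 0 ≤ q) (hsq : s • (M *ᵥ q + u) ≤ q) :
    ∃ r : ι → ℝ, (∀ k, 0 < r k) ∧ r ≤ q ∧ r = s • (M *ᵥ r + u) := by
  have hT : Monotone fun x => s • (M *ᵥ x + u) := fun x y h =>
    smul_le_smul_of_nonneg_left (add_le_add_left (mulVec_mono_of_nonneg hM h) u) hs.le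
  have hT0 : (0 : ι → ℝ) ≤ s • (M *ᵥ 0 + u) := fun k => by
    simpa using (mul_pos hs (hu k)).le
  obtain ⟨r, ⟨hr0, hrq⟩, hr⟩ := exists_mem_Icc_apply_eq_self hT hq hT0 hsq
  have hMr : 0 ≤ M *ᵥ r := by simpa using mulVec_mono_of_nonneg hM hr0
  refine ⟨r, fun k => ?_, hrq, hr.symm⟩
  rw [← hr]
  exact mul_pos hs (add_pos_of_nonneg_of_pos (hMr k) (hu k))

theorem le_of_forall_eq_smul_mulVec_add_le (hM : ∀ i j, 0 ≤ M i j) (hu : ∀ k, 0 < u k)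
    {F : (ι → ℝ) → Prop} (hF : ∀ r q, 0 ≤ r → r ≤ q → F q → F r) {t : ℝ} (ht : 0 < t)
    (hmax : ∀ (t' : ℝ) (r : ι → ℝ), 0 < t' → (∀ i, 0 < r i) → r = t' • (M *ᵥ r + u) → F r →
      t' ≤ t)
    {q : ι → ℝ} (hq : 0 ≤ q) (hqF : F q) {s : ℝ} (hs : ∀ k, s ≤ q k / (M *ᵥ q + u) k) :
    s ≤ t := by
  rcases le_or_gt s 0 with hs0 | hs0
  · linarith
  have hsq : s • (M *ᵥ q + u) ≤ q := fun k => by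
    have hMq : 0 ≤ (M *ᵥ q) k := by simpa using mulVec_mono_of_nonneg hM hq k
    exact (le_div_iff₀ (add_pos_of_nonneg_of_pos hMq (hu k))).1 (hs k)
  obtain ⟨r, hr0, hrq, hr⟩ := exists_pos_eq_smul_mulVec_add_le hM hu hs0 hq hsq
  exact hmax s r hs0 hr0 hr (hF r q (fun k => (hr0 k).le) hrq hqF)

end PositiveFixedPoint

theorem sup'_dotProduct_abs_mono {ι ν : Type*} [Fintype ι] {s : Finset ν} (hs : s.Nonempty)
    {a : ν → ι → ℝ} (ha : ∀ n k, 0 ≤ a n k) {r q : ι → ℝ} (h : ∀ k, |r k| ≤ |q k|) :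
    s.sup' hs (fun n => a n ⬝ᵥ fun k => |r k|) ≤ s.sup' hs (fun n => a n ⬝ᵥ fun k => |q k|) :=
  Finset.sup'_mono_fun fun n _ => dotProduct_le_dotProduct_of_nonneg_left h (ha n)

theorem sinr_eq_div_mulVec_add {ι : Type*} [Fintype ι] {b σv u : ι → ℝ} {C M : Matrix ι ι ℝ}
    (hMdef : ∀ k j, M k j = C j k / b k) (hudef : ∀ k, u k = σv k / b k) (q : ι → ℝ) (k : ι) :
    b k * q k / ((fun i => C i k) ⬝ᵥ q + σv k) = q k / (M *ᵥ q + u) k := by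
  have hMq : (M *ᵥ q + u) k = ((fun i => C i k) ⬝ᵥ q + σv k) / b k := by
    simp only [Pi.add_apply, mulVec, dotProduct, hMdef, hudef, div_mul_eq_mul_div,
      ← Finset.sum_div, add_div]
  rw [hMq, div_div_eq_mul_div, mul_comm]

theorem stmt_19 {K N : ℕ} (hK : 0 < K) (hN : 0 < N) (pmax : ℝ) (hpmax : 0 < pmax)
    (a : Fin N → Fin K → ℝ) (ha : ∀ n k, 0 ≤ a n k)
    (b : Fin K → ℝ) (hb : ∀ k, 0 < b k)
    (C : Matrix (Fin K) (Fin K) ℝ) (hC : ∀ i j, 0 ≤ C i j)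
    (σv : Fin K → ℝ) (hσ : ∀ k, 0 < σv k)
    (M : Matrix (Fin K) (Fin K) ℝ) (hMdef : ∀ k j, M k j = C j k / b k)
    (u : Fin K → ℝ) (hudef : ∀ k, u k = σv k / b k)
    (nstar : (Fin K → ℝ) → ℝ)
    (hnstar : ∀ q, nstar q = (1 / pmax) *
      Finset.univ.sup' ⟨⟨0, hN⟩, Finset.mem_univ _⟩ (fun n => a n ⬝ᵥ fun k => |q k|))
    (S : Set (Fin K → ℝ)) (hSdef : S = {q | (∀ i, 0 ≤ q i) ∧ nstar q ≤ 1})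
    (t : ℝ) (ht : 0 < t) (p : Fin K → ℝ) (hp : ∀ i, 0 < p i)
    (heq : p = t • (M.mulVec p + u)) (hfeas : nstar p ≤ 1)
    (hmax : ∀ (t' : ℝ) (q : Fin K → ℝ), 0 < t' → (∀ i, 0 < q i) →
      q = t' • (M.mulVec q + u) → nstar q ≤ 1 → t' ≤ t) :
    p ∈ S ∧
    (∀ q ∈ S, Finset.univ.inf' ⟨⟨0, hK⟩, Finset.mem_univ _⟩
        (fun k => b k * q k / ((fun i => C i k) ⬝ᵥ q + σv k)) ≤ t) ∧
    Finset.univ.inf' ⟨⟨0, hK⟩, Finset.mem_univ _⟩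
        (fun k => b k * p k / ((fun i => C i k) ⬝ᵥ p + σv k)) = t := by
  subst hSdef
  have hM : ∀ i j, 0 ≤ M i j := fun i j => hMdef i j ▸ div_nonneg (hC j i) (hb i).le
  have hu : ∀ k, 0 < u k := fun k => hudef k ▸ div_pos (hσ k) (hb k)
  have hdown : ∀ r q : Fin K → ℝ, 0 ≤ r → r ≤ q → nstar q ≤ 1 → nstar r ≤ 1 := by
    intro r q hr hrq hq
    refine le_trans ?_ hq
    rw [hnstar, hnstar]
    gcongr
    exact sup'_dotProduct_abs_mono _ ha fun k => abs_le_abs_of_nonneg (hr k) (hrq k)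
  simp_rw [sinr_eq_div_mulVec_add hMdef hudef]
  refine ⟨⟨fun i => (hp i).le, hfeas⟩, ?_, ?_⟩
  · rintro q ⟨hq, hqF⟩
    exact le_of_forall_eq_smul_mulVec_add_le hM hu hdown ht hmax hq hqF
      fun k => Finset.inf'_le _ (Finset.mem_univ k)
  · have hval : ∀ k, p k / (M *ᵥ p + u) k = t := fun k => by
      have hpk : p k = t * (M *ᵥ p + u) k := congrFun heq k
      have hden : 0 < (M *ᵥ p + u) k := by
        rw [← mul_lt_mul_iff_of_pos_left ht, ← hpk, mul_zero]; exact hp k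
      rw [div_eq_iff hden.ne', hpk]
    simp only [hval]
    exact Finset.inf'_const _ t
end
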